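/- Let K_l and K_{l−1} be Markov kernels on X with invariant probabilities π_l and π_{l−1}. Assume: (i) uniform ergodicity sup_x ‖K_j^n(x,·) − π_j‖_TV ≤ C ρ^n for j ∈ {l−1, l}; (ii) |[π_l − π_{l−1}](φ)| ≤ C ‖φ‖_∞ h^β and sup_x |K_l(φ)(x) − K_{l−1}(φ)(x)| ≤ C ‖φ‖_∞ h^β for all bounded measurable φ. Then the Poisson solutions φ̂_l, φ̂_{l−1} satisfy sup_x |φ̂_l(x) − φ̂_{l−1}(x)| ≤ C' ‖φ‖_∞ h^β for a constant C' not depending on l, h, or φ. -/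

import Mathlib

/-!
Write `P, Q` for the two kernels, `π, π'` for their invariant laws, and centre `φ` at `π'`:
`ψ j := Q^j φ - π' φ`, which is `O(ρ^j)` by ergodicity of `Q`. The discrete Duhamel formula
`P^n ψ 0 - ψ n = ∑_{j<n} P^(n-1-j) d j` with `d j := P ψ j - ψ (j+1) = (P - Q) ψ j = O(h^β ρ^j)`,
together with `π P = π`, turns the `n`-th term of `φ̂_P - φ̂_Q` into
`∑_{j<n} (P^(n-1-j) d j - π d j) + (π' - π) ψ n`. Ergodicity of `P` makes every summand
`O(h^β ρ^(n-1))` and the closeness of `π, π'` makes the last term `O(h^β ρ^n)`; the series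
`∑ n ρ^(n-1)` and `∑ ρ^n` then give the constant.
-/

open MeasureTheory ProbabilityTheory

/-- `n`-th iterate of a Markov kernel, with `kIter K 0 = id`. -/
noncomputable def kIter {X : Type*} [MeasurableSpace X] (K : Kernel X X) : ℕ → Kernel X X
  | 0 => Kernel.id
  | n + 1 => K ∘ₖ kIter K n

open Finset

variable {X : Type*} [MeasurableSpace X]

section BoundedFunctions

variable {μ ν : Measure X} {f : X → ℝ} {B : ℝ}

theorem integrable_of_abs_le [IsFiniteMeasure μ] (hf : Measurable f) (hfB : ∀ x, |f x| ≤ B) :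
    Integrable f μ :=
  .of_bound hf.aestronglyMeasurable B (ae_of_all _ fun x => (Real.norm_eq_abs _).trans_le (hfB x))

theorem abs_integral_le_of_abs_le [IsProbabilityMeasure μ] (hfB : ∀ x, |f x| ≤ B) :
    |∫ x, f x ∂μ| ≤ B := by
  simpa using norm_integral_le_of_norm_le_const (μ := μ) (f := f) (C := B) (ae_of_all _ hfB)

theorem integral_sub_const [IsProbabilityMeasure μ] (hf : Integrable f μ) (c : ℝ) :
    ∫ x, f x - c ∂μ = ∫ x, f x ∂μ - c := by
  simp [integral_sub hf (integrable_const c)]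

theorem integral_eq_setIntegral_measureReal_lt [IsFiniteMeasure μ] {g : X → ℝ} {c : ℝ}
    (hg : Measurable g) (hg₀ : ∀ x, 0 ≤ g x) (hgc : ∀ x, g x ≤ c) :
    ∫ x, g x ∂μ = ∫ t in Set.Ioc 0 c, μ.real {x | t < g x} := by
  rw [(integrable_of_abs_le hg fun x => (abs_of_nonneg (hg₀ x)).trans_le (hgc x)
    ).integral_eq_integral_meas_lt (ae_of_all _ hg₀)]
  refine setIntegral_eq_of_subset_of_forall_sdiff_eq_zero measurableSet_Ioi
    Set.Ioc_subset_Ioi_self fun t ht => ?_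
  have : {x | t < g x} = ∅ := Set.eq_empty_of_forall_notMem fun x hx =>
    ht.2 ⟨ht.1, hx.le.trans (hgc x)⟩
  simp [this]

theorem abs_integral_sub_integral_le_of_nonneg_of_le [IsProbabilityMeasure μ]
    [IsProbabilityMeasure ν] {g : X → ℝ} {c ε : ℝ} (hg : Measurable g) (hg₀ : ∀ x, 0 ≤ g x)
    (hgc : ∀ x, g x ≤ c) (hμν : ∀ s, MeasurableSet s → |μ.real s - ν.real s| ≤ ε) :
    |∫ x, g x ∂μ - ∫ x, g x ∂ν| ≤ c * ε := by
  have hc : 0 ≤ c := by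
    obtain ⟨x⟩ := nonempty_of_isProbabilityMeasure μ
    exact (hg₀ x).trans (hgc x)
  have hlevel (m : Measure X) [IsProbabilityMeasure m] :
      IntegrableOn (fun t => m.real {x | t < g x}) (Set.Ioc 0 c) := by
    have hanti : Antitone fun t => m.real {x | t < g x} := fun s t hst =>
      measureReal_mono fun x hx => hst.trans_lt hx
    refine Measure.integrableOn_of_bounded (M := 1) measure_Ioc_lt_top.ne
      hanti.measurable.aestronglyMeasurable (ae_of_all _ fun t => ?_)
    rw [Real.norm_eq_abs, abs_of_nonneg measureReal_nonneg]
    exact measureReal_le_one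
  rw [integral_eq_setIntegral_measureReal_lt hg hg₀ hgc,
    integral_eq_setIntegral_measureReal_lt hg hg₀ hgc, ← integral_sub (hlevel μ) (hlevel ν),
    ← Real.norm_eq_abs]
  calc _ ≤ ε * volume.real (Set.Ioc 0 c) :=
        norm_setIntegral_le_of_norm_le_const measure_Ioc_lt_top fun t _ =>
          hμν _ (measurableSet_lt measurable_const hg)
    _ = c * ε := by rw [Real.volume_real_Ioc_of_le hc, sub_zero, mul_comm]

theorem abs_integral_sub_integral_le_of_abs_le [IsProbabilityMeasure μ] [IsProbabilityMeasure ν]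
    {ε : ℝ} (hf : Measurable f) (hfB : ∀ x, |f x| ≤ B)
    (hμν : ∀ s, MeasurableSet s → |μ.real s - ν.real s| ≤ ε) :
    |∫ x, f x ∂μ - ∫ x, f x ∂ν| ≤ 2 * B * ε := by
  have hshift := abs_integral_sub_integral_le_of_nonneg_of_le (g := fun x => f x - -B)
    (c := 2 * B) (hf.sub_const _) (fun x => by linarith [neg_abs_le (f x), hfB x])
    (fun x => by linarith [le_abs_self (f x), hfB x]) hμν
  rwa [integral_sub_const (integrable_of_abs_le hf hfB),
    integral_sub_const (integrable_of_abs_le hf hfB), sub_sub_sub_cancel_right] at hshift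

end BoundedFunctions

theorem kIter_eq_pow (K : Kernel X X) (n : ℕ) : kIter K n = K ^ n := by
  induction n with
  | zero => rfl
  | succ n ih => rw [pow_succ', ← ih]; rfl

theorem integral_integral_eq_of_comp_eq {κ : Kernel X X} {π : Measure X}
    (hπ : κ ∘ₘ π = π) {f : X → ℝ} (hf : Integrable f π) :
    ∫ x, ∫ y, f y ∂κ x ∂π = ∫ x, f x ∂π := by
  conv_rhs => rw [← hπ, Measure.comp_eq_comp_const_apply]
  rw [Kernel.integral_comp (by rwa [← Measure.comp_eq_comp_const_apply, hπ])]
  rfl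

namespace ProbabilityTheory.Kernel

instance isMarkovKernel_pow (K : Kernel X X) [IsMarkovKernel K] (n : ℕ) :
    IsMarkovKernel (K ^ n) := by
  induction n with
  | zero => exact inferInstanceAs (IsMarkovKernel Kernel.id)
  | succ n ih => rw [pow_succ]; exact inferInstanceAs (IsMarkovKernel ((K ^ n) ∘ₖ K))

theorem measurable_integral_apply {Y : Type*} [MeasurableSpace Y] (κ : Kernel X Y) {f : Y → ℝ}
    (hf : Measurable f) : Measurable fun x => ∫ y, f y ∂κ x :=
  hf.stronglyMeasurable.integral_kernel.measurable

theorem integrable_integral_apply {Y : Type*} [MeasurableSpace Y] (κ : Kernel X Y)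
    [IsMarkovKernel κ] {μ : Measure X} [IsFiniteMeasure μ] {f : Y → ℝ} {B : ℝ}
    (hf : Measurable f) (hfB : ∀ y, |f y| ≤ B) : Integrable (fun x => ∫ y, f y ∂κ x) μ :=
  integrable_of_abs_le (κ.measurable_integral_apply hf) fun _ => abs_integral_le_of_abs_le hfB

variable (K : Kernel X X) {f : X → ℝ}

theorem integral_pow_zero_apply (hf : Measurable f) (x : X) : ∫ y, f y ∂(K ^ 0) x = f x := by
  rw [pow_zero]
  exact integral_dirac' f x hf.stronglyMeasurable

theorem pow_comp_eq_self {π : Measure X} (hπ : K ∘ₘ π = π) (n : ℕ) : (K ^ n) ∘ₘ π = π := by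
  induction n with
  | zero => exact Measure.id_comp
  | succ n ih =>
    rw [pow_succ]
    change ((K ^ n) ∘ₖ K) ∘ₘ π = π
    rw [← Measure.comp_assoc, hπ, ih]

theorem integral_pow_succ_apply {n : ℕ} {x : X} (hf : Integrable f ((K ^ (n + 1)) x)) :
    ∫ y, f y ∂(K ^ (n + 1)) x = ∫ y, ∫ z, f z ∂(K ^ n) y ∂K x := by
  rw [pow_succ] at hf ⊢
  exact integral_comp hf

theorem integral_pow_succ_apply' {n : ℕ} {x : X} (hf : Integrable f ((K ^ (n + 1)) x)) :
    ∫ y, f y ∂(K ^ (n + 1)) x = ∫ y, ∫ z, f z ∂K y ∂(K ^ n) x := by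
  rw [pow_succ'] at hf ⊢
  exact integral_comp hf

theorem integral_pow_sub_eq_sum [IsMarkovKernel K] {ψ : ℕ → X → ℝ} {B : ℕ → ℝ}
    (hψ : ∀ j, Measurable (ψ j)) (hψB : ∀ j x, |ψ j x| ≤ B j) (n : ℕ) (x : X) :
    ∫ y, ψ 0 y ∂(K ^ n) x - ψ n x =
      ∑ j ∈ range n, ∫ y, (∫ z, ψ j z ∂K y - ψ (j + 1) y) ∂(K ^ (n - (j + 1))) x := by
  induction n generalizing ψ B x with
  | zero => rw [integral_pow_zero_apply _ (hψ 0), sub_self, range_zero, sum_empty]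
  | succ n ih =>
    have hd₀ : Integrable (fun y => ∫ z, ψ 0 z ∂K y - ψ 1 y) ((K ^ n) x) :=
      integrable_of_abs_le ((K.measurable_integral_apply (hψ 0)).sub (hψ 1)) fun y =>
        (abs_sub _ _).trans (add_le_add (abs_integral_le_of_abs_le (hψB 0)) (hψB 1 y))
    have hsplit : ∫ y, ∫ z, ψ 0 z ∂K y ∂(K ^ n) x =
        ∫ y, ψ 1 y ∂(K ^ n) x + ∫ y, (∫ z, ψ 0 z ∂K y - ψ 1 y) ∂(K ^ n) x := by
      rw [← integral_add (integrable_of_abs_le (hψ 1) (hψB 1)) hd₀]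
      simp
    rw [K.integral_pow_succ_apply' (integrable_of_abs_le (hψ 0) (hψB 0)), sum_range_succ',
      hsplit]
    have := ih (ψ := fun j => ψ (j + 1)) (fun j => hψ _) (fun j => hψB _) x
    simp only [Nat.add_sub_add_right, zero_add, Nat.add_sub_cancel] at this ⊢
    linarith

end ProbabilityTheory.Kernel

section PoissonTerm

variable (K : Kernel X X) (π : Measure X) (f : X → ℝ)

noncomputable def poissonTerm (n : ℕ) (x : X) : ℝ := ∫ y, f y ∂(K ^ n) x - ∫ y, f y ∂π

/-- The solution `φ̂` of the Poisson equation `φ̂ - K φ̂ = φ - π φ`; the `tsum` is `0` when the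
series diverges. -/
noncomputable def poissonSolution (x : X) : ℝ := ∑' n, poissonTerm K π f n x

variable {K π f} {B : ℝ}

theorem measurable_poissonTerm (hf : Measurable f) (n : ℕ) : Measurable (poissonTerm K π f n) :=
  ((K ^ n).measurable_integral_apply hf).sub_const _

theorem poissonTerm_zero (hf : Measurable f) :
    poissonTerm K π f 0 = fun x => f x - ∫ y, f y ∂π := by
  ext x
  rw [poissonTerm, K.integral_pow_zero_apply hf]

variable [IsMarkovKernel K]

theorem integral_poissonTerm_succ (hf : Measurable f) (hfB : ∀ x, |f x| ≤ B) (n : ℕ) (x : X) :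
    ∫ y, poissonTerm K π f n y ∂K x = poissonTerm K π f (n + 1) x := by
  simp only [poissonTerm]
  rw [integral_sub_const ((K ^ n).integrable_integral_apply hf hfB),
    K.integral_pow_succ_apply (integrable_of_abs_le hf hfB)]

variable [IsProbabilityMeasure π]

theorem poissonTerm_sub_const (hf : Measurable f) (hfB : ∀ x, |f x| ≤ B) (c : ℝ) :
    poissonTerm K π (fun x => f x - c) = poissonTerm K π f := by
  ext n x
  simp only [poissonTerm, integral_sub_const (integrable_of_abs_le hf hfB)]
  ring

theorem integral_poissonTerm_eq_zero (hπ : K ∘ₘ π = π) (hf : Measurable f) (hfB : ∀ x, |f x| ≤ B)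
    (n : ℕ) : ∫ x, poissonTerm K π f n x ∂π = 0 := by
  simp only [poissonTerm]
  rw [integral_sub_const ((K ^ n).integrable_integral_apply hf hfB),
    integral_integral_eq_of_comp_eq (K.pow_comp_eq_self hπ n) (integrable_of_abs_le hf hfB),
    sub_self]

end PoissonTerm

theorem poissonTerm_sub_eq_sum {P : Kernel X X} [IsMarkovKernel P] {π : Measure X}
    [IsProbabilityMeasure π] (hπ : P ∘ₘ π = π) {ψ : ℕ → X → ℝ} {B : ℕ → ℝ}
    (hψ : ∀ j, Measurable (ψ j)) (hψB : ∀ j x, |ψ j x| ≤ B j) (n : ℕ) (x : X) :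
    poissonTerm P π (ψ 0) n x - ψ n x =
      ∑ j ∈ range n, poissonTerm P π (fun y => ∫ z, ψ j z ∂P y - ψ (j + 1) y) (n - (j + 1)) x -
        ∫ y, ψ n y ∂π := by
  have hπd (j : ℕ) : ∫ y, (∫ z, ψ j z ∂P y - ψ (j + 1) y) ∂π =
      ∫ y, ψ j y ∂π - ∫ y, ψ (j + 1) y ∂π := by
    rw [integral_sub (P.integrable_integral_apply (hψ j) (hψB j))
      (integrable_of_abs_le (hψ _) (hψB _)),
      integral_integral_eq_of_comp_eq hπ (integrable_of_abs_le (hψ j) (hψB j))]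
  simp only [poissonTerm]
  rw [sum_sub_distrib, ← P.integral_pow_sub_eq_sum hψ hψB, sum_congr rfl fun j _ => hπd j,
    sum_range_sub']
  ring

def UniformlyErgodic (K : Kernel X X) (π : Measure X) (A ρ : ℝ) : Prop :=
  ∀ (f : X → ℝ) (B : ℝ), Measurable f → (∀ x, |f x| ≤ B) →
    ∀ n x, |poissonTerm K π f n x| ≤ A * B * ρ ^ n

theorem uniformlyErgodic_of_abs_measureReal_sub_le {K : Kernel X X} [IsMarkovKernel K]
    {π : Measure X} [IsProbabilityMeasure π] {C ρ : ℝ} (hC : 0 ≤ C) (hρ : 0 ≤ ρ)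
    (hK : ∀ n, 1 ≤ n → ∀ x s, MeasurableSet s → |((K ^ n) x).real s - π.real s| ≤ C * ρ ^ n) :
    UniformlyErgodic K π (2 * (C + 1)) ρ := by
  intro f B hf hfB n x
  obtain ⟨x₀⟩ := nonempty_of_isProbabilityMeasure π
  have hB : 0 ≤ B := (abs_nonneg _).trans (hfB x₀)
  rcases Nat.eq_zero_or_pos n with rfl | hn
  · calc _ ≤ |∫ y, f y ∂(K ^ 0) x| + |∫ y, f y ∂π| := abs_sub _ _
      _ ≤ B + B := add_le_add (abs_integral_le_of_abs_le hfB) (abs_integral_le_of_abs_le hfB)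
      _ ≤ 2 * (C + 1) * B * ρ ^ 0 := by nlinarith
  · calc _ ≤ 2 * B * (C * ρ ^ n) := abs_integral_sub_integral_le_of_abs_le hf hfB (hK n hn x)
      _ ≤ 2 * (C + 1) * B * ρ ^ n := by nlinarith [pow_nonneg hρ n]

theorem UniformlyErgodic.summable {K : Kernel X X} {π : Measure X} {A ρ : ℝ}
    (hK : UniformlyErgodic K π A ρ) (hρ₀ : 0 ≤ ρ) (hρ₁ : ρ < 1) {f : X → ℝ} {B : ℝ}
    (hf : Measurable f) (hfB : ∀ x, |f x| ≤ B) (x : X) : Summable (poissonTerm K π f · x) :=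
  .of_norm_bounded ((summable_geometric_of_lt_one hρ₀ hρ₁).mul_left (A * B)) fun n =>
    (Real.norm_eq_abs _).trans_le (hK f B hf hfB n x)

theorem hasSum_coe_mul_geometric_pred {r : ℝ} (hr₀ : 0 ≤ r) (hr₁ : r < 1) :
    HasSum (fun n : ℕ => n * r ^ (n - 1)) ((1 - r) ^ 2)⁻¹ := by
  have hnorm : ‖r‖ < 1 := by rwa [Real.norm_eq_abs, abs_of_nonneg hr₀]
  have h1r : 1 - r ≠ 0 := by linarith
  rw [← hasSum_nat_add_iff' 1, show ((1 - r) ^ 2)⁻¹ = r / (1 - r) ^ 2 + (1 - r)⁻¹ by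
    field_simp; ring]
  simpa [add_one_mul] using (hasSum_coe_mul_geometric_of_norm_lt_one hnorm).add
    (hasSum_geometric_of_lt_one hr₀ hr₁)

section Perturbation

variable {P Q : Kernel X X} [IsMarkovKernel P] [IsMarkovKernel Q] {π π' : Measure X}
  [IsProbabilityMeasure π] [IsProbabilityMeasure π'] {A D ρ : ℝ} {φ : X → ℝ} {B : ℝ}

theorem abs_poissonTerm_sub_le (hπ : P ∘ₘ π = π) (hπ' : Q ∘ₘ π' = π')
    (hP : UniformlyErgodic P π A ρ) (hQ : UniformlyErgodic Q π' A ρ)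
    (hππ' : ∀ (f : X → ℝ) (B : ℝ), Measurable f → (∀ x, |f x| ≤ B) →
      |∫ x, f x ∂π - ∫ x, f x ∂π'| ≤ D * B)
    (hPQ : ∀ (f : X → ℝ) (B : ℝ), Measurable f → (∀ x, |f x| ≤ B) →
      ∀ x, |∫ y, f y ∂P x - ∫ y, f y ∂Q x| ≤ D * B)
    (hφ : Measurable φ) (hφB : ∀ x, |φ x| ≤ B) (n : ℕ) (x : X) :
    |poissonTerm P π φ n x - poissonTerm Q π' φ n x| ≤
      A ^ 2 * D * B * (n * ρ ^ (n - 1)) + A * D * B * ρ ^ n := by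
  set ψ := poissonTerm Q π' φ
  have hψ : ∀ j, Measurable (ψ j) := measurable_poissonTerm hφ
  have hψB (j : ℕ) (y : X) : |ψ j y| ≤ A * B * ρ ^ j := hQ φ B hφ hφB j y
  have hd (j : ℕ) : Measurable fun y => ∫ z, ψ j z ∂P y - ψ (j + 1) y :=
    (P.measurable_integral_apply (hψ j)).sub (hψ (j + 1))
  have hdB (j : ℕ) (y : X) : |∫ z, ψ j z ∂P y - ψ (j + 1) y| ≤ D * (A * B * ρ ^ j) := by
    rw [show ψ (j + 1) y = ∫ z, ψ j z ∂Q y from (integral_poissonTerm_succ hφ hφB j y).symm]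
    exact hPQ _ _ (hψ j) (hψB j) y
  have hterm (j : ℕ) (hj : j ∈ range n) :
      |poissonTerm P π (fun y => ∫ z, ψ j z ∂P y - ψ (j + 1) y) (n - (j + 1)) x| ≤
        A * (D * (A * B * ρ ^ (n - 1))) := by
    have hexp : ρ ^ (n - 1) = ρ ^ j * ρ ^ (n - (j + 1)) := by
      rw [← pow_add]; congr 1; have := mem_range.1 hj; omega
    rw [hexp]
    exact (hP _ _ (hd j) (hdB j) (n - (j + 1)) x).trans_eq (by ring)
  rw [← poissonTerm_sub_const hφ hφB (∫ y, φ y ∂π'), ← poissonTerm_zero hφ,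
    poissonTerm_sub_eq_sum hπ hψ hψB, ← sub_zero (∫ y, ψ n y ∂π),
    ← integral_poissonTerm_eq_zero hπ' hφ hφB n]
  calc _ ≤ ∑ j ∈ range n,
          |poissonTerm P π (fun y => ∫ z, ψ j z ∂P y - ψ (j + 1) y) (n - (j + 1)) x| +
          |∫ y, ψ n y ∂π - ∫ y, ψ n y ∂π'| :=
        (abs_sub _ _).trans (by gcongr; exact abs_sum_le_sum_abs _ _)
    _ ≤ ∑ _j ∈ range n, A * (D * (A * B * ρ ^ (n - 1))) + D * (A * B * ρ ^ n) :=
        add_le_add (sum_le_sum hterm) (hππ' _ _ (hψ n) (hψB n))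
    _ = _ := by rw [sum_const, card_range, nsmul_eq_mul]; ring

theorem abs_poissonSolution_sub_le (hπ : P ∘ₘ π = π) (hπ' : Q ∘ₘ π' = π')
    (hP : UniformlyErgodic P π A ρ) (hQ : UniformlyErgodic Q π' A ρ) (hρ₀ : 0 ≤ ρ) (hρ₁ : ρ < 1)
    (hππ' : ∀ (f : X → ℝ) (B : ℝ), Measurable f → (∀ x, |f x| ≤ B) →
      |∫ x, f x ∂π - ∫ x, f x ∂π'| ≤ D * B)
    (hPQ : ∀ (f : X → ℝ) (B : ℝ), Measurable f → (∀ x, |f x| ≤ B) →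
      ∀ x, |∫ y, f y ∂P x - ∫ y, f y ∂Q x| ≤ D * B)
    (hφ : Measurable φ) (hφB : ∀ x, |φ x| ≤ B) (x : X) :
    |poissonSolution P π φ x - poissonSolution Q π' φ x| ≤
      A ^ 2 * D * B * ((1 - ρ) ^ 2)⁻¹ + A * D * B * (1 - ρ)⁻¹ := by
  rw [poissonSolution, poissonSolution,
    ← (hP.summable hρ₀ hρ₁ hφ hφB x).tsum_sub (hQ.summable hρ₀ hρ₁ hφ hφB x)]
  exact tsum_of_norm_bounded (((hasSum_coe_mul_geometric_pred hρ₀ hρ₁).mul_left _).add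
    ((hasSum_geometric_of_lt_one hρ₀ hρ₁).mul_left _))
    fun n => (Real.norm_eq_abs _).trans_le
      (abs_poissonTerm_sub_le hπ hπ' hP hQ hππ' hPQ hφ hφB n x)

end Perturbation

theorem poisson_solutions_close_general
    (C ρ β : ℝ) (hC : 0 ≤ C) (hρ : ρ ∈ Set.Ioo (0 : ℝ) 1) :
    ∃ C' : ℝ, 0 ≤ C' ∧
      ∀ (X : Type) (_ : MeasurableSpace X)
        (Kl Klm1 : Kernel X X), IsMarkovKernel Kl → IsMarkovKernel Klm1 →
      ∀ (πl πlm1 : Measure X), IsProbabilityMeasure πl → IsProbabilityMeasure πlm1 →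
        πl.bind Kl = πl → πlm1.bind Klm1 = πlm1 →
      ∀ (h : ℝ), h ∈ Set.Ioo (0 : ℝ) 1 →
      -- (i) uniform ergodicity for both kernels
      (∀ n, 1 ≤ n → ∀ x : X, ∀ s : Set X, MeasurableSet s →
        |((kIter Kl n) x s).toReal - (πl s).toReal| ≤ C * ρ ^ n) →
      (∀ n, 1 ≤ n → ∀ x : X, ∀ s : Set X, MeasurableSet s →
        |((kIter Klm1 n) x s).toReal - (πlm1 s).toReal| ≤ C * ρ ^ n) →
      -- (ii) perturbation bounds
      (∀ (φ : X → ℝ) (B : ℝ), Measurable φ → (∀ x, |φ x| ≤ B) →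
        |(∫ y, φ y ∂πl) - ∫ y, φ y ∂πlm1| ≤ C * B * h ^ β) →
      (∀ (φ : X → ℝ) (B : ℝ), Measurable φ → (∀ x, |φ x| ≤ B) →
        ∀ x : X, |(∫ y, φ y ∂(Kl x)) - ∫ y, φ y ∂(Klm1 x)| ≤ C * B * h ^ β) →
      ∀ (φ : X → ℝ) (B : ℝ), Measurable φ → (∀ x, |φ x| ≤ B) →
      ∀ x : X,
        |(∑' n : ℕ, ((∫ y, φ y ∂((kIter Kl n) x)) - ∫ y, φ y ∂πl))
          - ∑' n : ℕ, ((∫ y, φ y ∂((kIter Klm1 n) x)) - ∫ y, φ y ∂πlm1)|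
        ≤ C' * B * h ^ β := by
  obtain ⟨hρ₀, hρ₁⟩ := hρ
  refine ⟨(2 * (C + 1)) ^ 2 * C * ((1 - ρ) ^ 2)⁻¹ + 2 * (C + 1) * C * (1 - ρ)⁻¹, by positivity,
    ?_⟩
  intro X _ Kl Klm1 _ _ πl πlm1 _ _ hπl hπlm1 h _ hKl hKlm1 hππ' hPQ φ B hφ hφB x
  simp only [kIter_eq_pow] at hKl hKlm1 ⊢
  have key := abs_poissonSolution_sub_le (D := C * h ^ β) hπl hπlm1
    (uniformlyErgodic_of_abs_measureReal_sub_le hC hρ₀.le hKl)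
    (uniformlyErgodic_of_abs_measureReal_sub_le hC hρ₀.le hKlm1) hρ₀.le hρ₁
    (fun f B hf hfB => (hππ' f B hf hfB).trans_eq (by ring))
    (fun f B hf hfB x => (hPQ f B hf hfB x).trans_eq (by ring)) hφ hφB x
  exact key.trans_eq (by ring)

/-- closeness of the Poisson solutions at consecutive levels.
The constant `C'` depends only on `C`, `ρ` and `β` (not on the kernels, on `h`,
or on `φ`). -/
theorem poisson_solutions_close
    (C ρ β : ℝ) (hC : 0 ≤ C) (hρ : ρ ∈ Set.Ioo (0 : ℝ) 1) (hβ : 0 < β) :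
    ∃ C' : ℝ, 0 ≤ C' ∧
      ∀ (X : Type) (_ : MeasurableSpace X)
        (Kl Klm1 : Kernel X X), IsMarkovKernel Kl → IsMarkovKernel Klm1 →
      ∀ (πl πlm1 : Measure X), IsProbabilityMeasure πl → IsProbabilityMeasure πlm1 →
        πl.bind Kl = πl → πlm1.bind Klm1 = πlm1 →
      ∀ (h : ℝ), h ∈ Set.Ioo (0 : ℝ) 1 →
      -- (i) uniform ergodicity for both kernels
      (∀ n, 1 ≤ n → ∀ x : X, ∀ s : Set X, MeasurableSet s →
        |((kIter Kl n) x s).toReal - (πl s).toReal| ≤ C * ρ ^ n) →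
      (∀ n, 1 ≤ n → ∀ x : X, ∀ s : Set X, MeasurableSet s →
        |((kIter Klm1 n) x s).toReal - (πlm1 s).toReal| ≤ C * ρ ^ n) →
      -- (ii) perturbation bounds
      (∀ (φ : X → ℝ) (B : ℝ), Measurable φ → (∀ x, |φ x| ≤ B) →
        |(∫ y, φ y ∂πl) - ∫ y, φ y ∂πlm1| ≤ C * B * h ^ β) →
      (∀ (φ : X → ℝ) (B : ℝ), Measurable φ → (∀ x, |φ x| ≤ B) →
        ∀ x : X, |(∫ y, φ y ∂(Kl x)) - ∫ y, φ y ∂(Klm1 x)| ≤ C * B * h ^ β) →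
      ∀ (φ : X → ℝ) (B : ℝ), Measurable φ → (∀ x, |φ x| ≤ B) →
      ∀ x : X,
        |(∑' n : ℕ, ((∫ y, φ y ∂((kIter Kl n) x)) - ∫ y, φ y ∂πl))
          - ∑' n : ℕ, ((∫ y, φ y ∂((kIter Klm1 n) x)) - ∫ y, φ y ∂πlm1)|
        ≤ C' * B * h ^ β :=
  poisson_solutions_close_general C ρ β hC hρ
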